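/- (Domino-Deficient Direc Theorem) Let t ≥ 0, n = 3t+4, and let D ⊆ R(2,n) be a domino. If D is vertical, occupying {(1,c),(2,c)}, then R(2,n) \ D is tileable by L-trominoes if and only if c ≡ 1 (mod 3). If D is horizontal, occupying {(r,c),(r,c+1)} with r ∈ {1,2}, then R(2,n) \ D is tileable by L-trominoes if and only if c ≡ 2 (mod 3). -/

import Mathlib

/-!
Cut the board between columns `j` and `j + 1`. An L-tromino occupies two adjacent columns, so
the trominoes lying in columns `≤ j + 1` cover every cell in columns `≤ j`: some multiple of `3`
lies between the number of cells in columns `≤ j` and in columns `≤ j + 1`. For the board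
`R(2,n)` minus a domino these counts are explicit, and the cut through the domino (vertical case)
or the two cuts next to it (horizontal case) force the stated residue of `c`. Conversely,
for those residues the board splits into `2 × 3` blocks, each the union of two trominoes, and at
most two trominoes that wrap around the domino.
-/

abbrev Cell : Type := ℤ × ℤ

/-- The m×n rectangle of cells (i,j), 1 ≤ i ≤ m (row), 1 ≤ j ≤ n (column). -/
def rect (m n : ℤ) : Set Cell :=
  {c : Cell | 1 ≤ c.1 ∧ c.1 ≤ m ∧ 1 ≤ c.2 ∧ c.2 ≤ n}

/-- An L-tromino: a 2×2 block minus one of its cells. -/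
def IsTromino (T : Set Cell) : Prop :=
  ∃ i j : ℤ, ∃ c : Cell,
    c ∈ ({(i, j), (i + 1, j), (i, j + 1), (i + 1, j + 1)} : Set Cell) ∧
    T = ({(i, j), (i + 1, j), (i, j + 1), (i + 1, j + 1)} : Set Cell) \ {c}

def IsHDomino (D : Set Cell) : Prop := ∃ i j : ℤ, D = {(i, j), (i, j + 1)}

def IsVDomino (D : Set Cell) : Prop := ∃ i j : ℤ, D = {(i, j), (i + 1, j)}

def IsDomino (D : Set Cell) : Prop := IsHDomino D ∨ IsVDomino D

/-- A partition of `S` into L-trominoes, identified with its set of pieces. -/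
def IsTromTiling (P : Set (Set Cell)) (S : Set Cell) : Prop :=
  (∀ p ∈ P, IsTromino p) ∧ P.PairwiseDisjoint id ∧ ⋃₀ P = S

def Tileable (S : Set Cell) : Prop := ∃ P, IsTromTiling P S

/-- A partition of `S` into dominoes, identified with its set of pieces. -/
def IsDominoTiling (P : Set (Set Cell)) (S : Set Cell) : Prop :=
  (∀ p ∈ P, IsDomino p) ∧ P.PairwiseDisjoint id ∧ ⋃₀ P = S

/-- A partition of `S` into `k` L-trominoes and exactly one piece satisfying `dom`. -/
def IsMixedTiling (P : Set (Set Cell)) (S : Set Cell)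
    (dom : Set Cell → Prop) (k : ℕ) : Prop :=
  P.PairwiseDisjoint id ∧ ⋃₀ P = S ∧
  (∀ p ∈ P, IsTromino p ∨ dom p) ∧
  {p ∈ P | dom p}.ncard = 1 ∧ {p ∈ P | IsTromino p}.ncard = k

def upToCol (j : ℤ) : Set Cell := {x | x.2 ≤ j}

namespace IsTromino

variable {p : Set Cell}

lemma finite (h : IsTromino p) : p.Finite := by
  obtain ⟨i, j, c, -, rfl⟩ := h
  exact (Set.toFinite _).sdiff

lemma ncard_eq (h : IsTromino p) : p.ncard = 3 := by
  obtain ⟨i, j, c, hc, rfl⟩ := h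
  have hblock : ({(i, j), (i + 1, j), (i, j + 1), (i + 1, j + 1)} : Set Cell).ncard = 4 := by
    rw [Set.ncard_insert_of_notMem, Set.ncard_insert_of_notMem, Set.ncard_pair] <;> simp
  rw [Set.ncard_sdiff_singleton_of_mem hc, hblock]

lemma snd_le_succ (h : IsTromino p) {x y : Cell} (hx : x ∈ p) (hy : y ∈ p) :
    y.2 ≤ x.2 + 1 := by
  obtain ⟨i, j, c, -, rfl⟩ := h
  simp only [Set.mem_sdiff, Set.mem_insert_iff, Set.mem_singleton_iff] at hx hy
  rcases hx.1 with rfl | rfl | rfl | rfl <;> rcases hy.1 with rfl | rfl | rfl | rfl <;>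
    dsimp only <;> omega

end IsTromino

lemma IsTromTiling.exists_three_mul_between {P : Set (Set Cell)} {S : Set Cell}
    (hP : IsTromTiling P S) (hS : S.Finite) (j : ℤ) :
    ∃ k, (S ∩ upToCol j).ncard ≤ 3 * k ∧ 3 * k ≤ (S ∩ upToCol (j + 1)).ncard := by
  obtain ⟨htrom, hdisj, hcover⟩ := hP
  have hsub : ∀ p ∈ P, p ⊆ S := fun p hp => hcover ▸ Set.subset_sUnion_of_mem hp
  set Q := {p ∈ P | p ⊆ upToCol (j + 1)}
  have hQ : Q.Finite := (hS.finite_subsets.subset hsub).subset (Set.sep_subset _ _)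
  have hcard : (⋃₀ Q).ncard = 3 * Q.ncard := by
    rw [Set.sUnion_eq_biUnion, hQ.ncard_biUnion (fun p hp => (htrom p hp.1).finite)
      (hdisj.subset (Set.sep_subset _ _)),
      finsum_mem_congr rfl (fun p hp => (htrom p hp.1).ncard_eq),
      finsum_mem_eq_finite_toFinset_sum _ hQ, Finset.sum_const, smul_eq_mul, mul_comm,
      Set.ncard_eq_toFinset_card Q hQ]
  have hUfin : (⋃₀ Q).Finite := hS.subset (Set.sUnion_subset fun p hp => hsub p hp.1)
  refine ⟨Q.ncard, hcard ▸ Set.ncard_le_ncard ?_ hUfin,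
    hcard ▸ Set.ncard_le_ncard ?_ (hS.inter_of_left _)⟩
  · rintro x ⟨hxS, hxj⟩
    rw [← hcover] at hxS
    obtain ⟨p, hp, hxp⟩ := hxS
    refine ⟨p, ⟨hp, fun y hy => ?_⟩, hxp⟩
    exact ((htrom p hp).snd_le_succ hxp hy).trans (by simpa [upToCol] using hxj)
  · exact Set.sUnion_subset fun p hp => Set.subset_inter (hsub p hp.1) hp.2

lemma rect_inter_upToCol (m : ℤ) {n j : ℤ} (hjn : j ≤ n) :
    rect m n ∩ upToCol j = rect m j := by
  ext x
  simp only [rect, upToCol, Set.mem_inter_iff, Set.mem_ofPred_eq]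
  omega

lemma rect_finite (m n : ℤ) : (rect m n).Finite :=
  ((Set.finite_Icc 1 m).prod (Set.finite_Icc 1 n)).subset
    fun _ hx => ⟨⟨hx.1, hx.2.1⟩, hx.2.2⟩

lemma ncard_rect {m n : ℤ} (hm : 0 ≤ m) (hn : 0 ≤ n) : ((rect m n).ncard : ℤ) = m * n := by
  have : rect m n = Set.Icc 1 m ×ˢ Set.Icc 1 n := by
    ext x
    simp only [rect, Set.mem_ofPred_eq, Set.mem_prod, Set.mem_Icc]
    tauto
  rw [this, Set.ncard_prod, Set.ncard_eq_toFinset_card', Set.ncard_eq_toFinset_card']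
  simp [hm, hn]

lemma ncard_rect_sdiff_inter_upToCol {m n j : ℤ} {D : Set Cell} (hD : D ⊆ rect m n)
    (hm : 0 ≤ m) (hj : 0 ≤ j) (hjn : j ≤ n) :
    (((rect m n \ D) ∩ upToCol j).ncard : ℤ) = m * j - (D ∩ upToCol j).ncard := by
  have hsub : D ∩ upToCol j ⊆ rect m j :=
    rect_inter_upToCol m hjn ▸ Set.inter_subset_inter_left _ hD
  rw [Set.inter_sdiff_distrib_right, rect_inter_upToCol m hjn,
    Set.ncard_sdiff hsub ((rect_finite m j).subset hsub),
    Nat.cast_sub (Set.ncard_le_ncard hsub (rect_finite m j)), ncard_rect hm hj]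

lemma Tileable.exists_three_mul_between_rect_sdiff {m n j : ℤ} {D : Set Cell}
    (hT : Tileable (rect m n \ D)) (hD : D ⊆ rect m n) (hm : 0 ≤ m) (hj : 0 ≤ j)
    (hjn : j + 1 ≤ n) :
    ∃ k : ℤ, m * j - (D ∩ upToCol j).ncard ≤ 3 * k ∧
      3 * k ≤ m * (j + 1) - (D ∩ upToCol (j + 1)).ncard := by
  obtain ⟨P, hP⟩ := hT
  obtain ⟨k, hlo, hhi⟩ := hP.exists_three_mul_between ((rect_finite m n).sdiff) j
  have hcut := ncard_rect_sdiff_inter_upToCol hD hm hj (by omega)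
  have hcut' := ncard_rect_sdiff_inter_upToCol hD hm (by omega) hjn
  exact ⟨k, by omega, by omega⟩

lemma ncard_pair_inter_upToCol {a b : Cell} (hab : a ≠ b) (j : ℤ) :
    (({a, b} : Set Cell) ∩ upToCol j).ncard =
      (if a.2 ≤ j then 1 else 0) + (if b.2 ≤ j then 1 else 0) := by
  have : ({a, b} : Set Cell) ∩ upToCol j = ↑(({a, b} : Finset Cell).filter (·.2 ≤ j)) := by
    ext
    simp [upToCol]
  rw [this, Set.ncard_coe_finset, Finset.card_filter, Finset.sum_pair hab]

lemma mod_three_eq_one_of_tileable_rect_sdiff_vdomino {n c : ℤ}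
    (hD : ({(1, c), (2, c)} : Set Cell) ⊆ rect 2 n)
    (hT : Tileable (rect 2 n \ ({(1, c), (2, c)} : Set Cell))) : c % 3 = 1 := by
  have hc : (1, c) ∈ rect 2 n := hD (by simp)
  simp only [rect, Set.mem_ofPred_eq] at hc
  obtain ⟨k, hlo, hhi⟩ :=
    hT.exists_three_mul_between_rect_sdiff hD (by norm_num) (j := c - 1) (by omega) (by omega)
  rw [ncard_pair_inter_upToCol (by simp)] at hlo hhi
  split_ifs at hlo hhi <;> omega

lemma mod_three_eq_two_of_tileable_rect_sdiff_hdomino {n r c : ℤ}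
    (hD : ({(r, c), (r, c + 1)} : Set Cell) ⊆ rect 2 n)
    (hT : Tileable (rect 2 n \ ({(r, c), (r, c + 1)} : Set Cell))) : c % 3 = 2 := by
  have hc : (r, c) ∈ rect 2 n := hD (by simp)
  have hc' : (r, c + 1) ∈ rect 2 n := hD (by simp)
  simp only [rect, Set.mem_ofPred_eq] at hc hc'
  obtain ⟨k, hlo, hhi⟩ :=
    hT.exists_three_mul_between_rect_sdiff hD (by norm_num) (j := c - 1) (by omega) (by omega)
  obtain ⟨k', hlo', hhi'⟩ :=
    hT.exists_three_mul_between_rect_sdiff hD (by norm_num) (j := c) (by omega) (by omega)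
  rw [ncard_pair_inter_upToCol (by simp)] at hlo hhi hlo' hhi'
  split_ifs at hlo hhi hlo' hhi' <;>
    rcases (by omega : c % 3 = 0 ∨ c % 3 = 1 ∨ c % 3 = 2) with h | h | h <;> omega

lemma Tileable.empty : Tileable ∅ :=
  ⟨∅, by simp [IsTromTiling]⟩

lemma IsTromino.tileable {T : Set Cell} (h : IsTromino T) : Tileable T :=
  ⟨{T}, by simpa using h, Set.pairwiseDisjoint_singleton _ _, Set.sUnion_singleton _⟩

lemma Tileable.union {S T : Set Cell} (hS : Tileable S) (hT : Tileable T) (h : Disjoint S T) :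
    Tileable (S ∪ T) := by
  obtain ⟨P, hPtrom, hPdisj, rfl⟩ := hS
  obtain ⟨Q, hQtrom, hQdisj, rfl⟩ := hT
  refine ⟨P ∪ Q, fun p hp => hp.elim (hPtrom p) (hQtrom p), ?_, Set.sUnion_union P Q⟩
  exact hPdisj.union hQdisj fun p hp q hq _ =>
    h.mono (Set.subset_sUnion_of_mem hp) (Set.subset_sUnion_of_mem hq)

lemma isTromino_vpair_cell {s : ℤ} (hs : s = 1 ∨ s = 2) (a : ℤ) :
    IsTromino {(1, a), (2, a), (s, a + 1)} := by
  refine ⟨1, a, (3 - s, a + 1), by rcases hs with rfl | rfl <;> simp, ?_⟩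
  ext ⟨i, j⟩
  simp only [Set.mem_insert_iff, Set.mem_singleton_iff, Set.mem_sdiff, Prod.mk.injEq]
  omega

lemma isTromino_cell_vpair {s : ℤ} (hs : s = 1 ∨ s = 2) (a : ℤ) :
    IsTromino {(s, a), (1, a + 1), (2, a + 1)} := by
  refine ⟨1, a, (3 - s, a), by rcases hs with rfl | rfl <;> simp, ?_⟩
  ext ⟨i, j⟩
  simp only [Set.mem_insert_iff, Set.mem_singleton_iff, Set.mem_sdiff, Prod.mk.injEq]
  omega

def strip (a : ℤ) (k : ℕ) : Set Cell :=
  {x | 1 ≤ x.1 ∧ x.1 ≤ 2 ∧ a ≤ x.2 ∧ x.2 < a + 3 * k}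

lemma tileable_strip (a : ℤ) (k : ℕ) : Tileable (strip a k) := by
  induction k generalizing a with
  | zero =>
    convert Tileable.empty
    ext x
    simp only [strip, Set.mem_ofPred_eq, Set.mem_empty_iff_false, iff_false]
    omega
  | succ k ih =>
    have hsplit : strip a (k + 1) =
        ({(1, a), (2, a), (1, a + 1)} ∪ {(2, a + 1), (1, a + 2), (2, a + 2)}) ∪
          strip (a + 3) k := by
      ext ⟨i, j⟩
      simp only [strip, Set.mem_ofPred_eq, Set.mem_union, Set.mem_insert_iff,
        Set.mem_singleton_iff, Prod.mk.injEq]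
      omega
    have hT := isTromino_cell_vpair (Or.inr rfl) (a + 1)
    rw [add_assoc, one_add_one_eq_two] at hT
    rw [hsplit]
    refine ((isTromino_vpair_cell (Or.inl rfl) a).tileable.union hT.tileable ?_).union (ih _) ?_ <;>
    · rw [Set.disjoint_left]
      rintro ⟨i, j⟩ hx hx'
      simp only [strip, Set.mem_ofPred_eq, Set.mem_union, Set.mem_insert_iff,
        Set.mem_singleton_iff, Prod.mk.injEq] at hx hx'
      omega

lemma tileable_rect_sdiff_vdomino {n c : ℤ} (hD : ({(1, c), (2, c)} : Set Cell) ⊆ rect 2 n)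
    (hc : c % 3 = 1) (hn : n % 3 = 1) : Tileable (rect 2 n \ {(1, c), (2, c)}) := by
  have hc1 : (1, c) ∈ rect 2 n := hD (by simp)
  simp only [rect, Set.mem_ofPred_eq] at hc1
  obtain ⟨s, hs⟩ : ∃ s : ℕ, 3 * (s : ℤ) = c - 1 := ⟨((c - 1) / 3).toNat, by omega⟩
  obtain ⟨u, hu⟩ : ∃ u : ℕ, 3 * (u : ℤ) = n - c := ⟨((n - c) / 3).toNat, by omega⟩
  have hsplit : rect 2 n \ {(1, c), (2, c)} = strip 1 s ∪ strip (c + 1) u := by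
    ext ⟨i, j⟩
    simp only [rect, strip, Set.mem_sdiff, Set.mem_ofPred_eq, Set.mem_union, Set.mem_insert_iff,
      Set.mem_singleton_iff, Prod.mk.injEq]
    omega
  rw [hsplit]
  refine (tileable_strip 1 s).union (tileable_strip (c + 1) u) ?_
  rw [Set.disjoint_left]
  rintro ⟨i, j⟩ hx hx'
  simp only [strip, Set.mem_ofPred_eq] at hx hx'
  omega

lemma tileable_rect_sdiff_hdomino {n r c : ℤ}
    (hD : ({(r, c), (r, c + 1)} : Set Cell) ⊆ rect 2 n) (hc : c % 3 = 2) (hn : n % 3 = 1) :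
    Tileable (rect 2 n \ {(r, c), (r, c + 1)}) := by
  have hc1 : (r, c) ∈ rect 2 n := hD (by simp)
  simp only [rect, Set.mem_ofPred_eq] at hc1
  obtain ⟨s, hs⟩ : ∃ s : ℕ, 3 * (s : ℤ) = c - 2 := ⟨((c - 2) / 3).toNat, by omega⟩
  obtain ⟨u, hu⟩ : ∃ u : ℕ, 3 * (u : ℤ) = n - c - 2 :=
    ⟨((n - c - 2) / 3).toNat, by omega⟩
  have hrow : 3 - r = 1 ∨ 3 - r = 2 := by omega
  have hT := isTromino_vpair_cell hrow (c - 1)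
  have hT' := isTromino_cell_vpair hrow (c + 1)
  rw [sub_add_cancel] at hT
  rw [add_assoc, one_add_one_eq_two] at hT'
  have hsplit : rect 2 n \ {(r, c), (r, c + 1)} =
      (strip 1 s ∪ {(1, c - 1), (2, c - 1), (3 - r, c)}) ∪
        ({(3 - r, c + 1), (1, c + 2), (2, c + 2)} ∪ strip (c + 3) u) := by
    ext ⟨i, j⟩
    simp only [rect, strip, Set.mem_sdiff, Set.mem_ofPred_eq, Set.mem_union, Set.mem_insert_iff,
      Set.mem_singleton_iff, Prod.mk.injEq]
    omega
  rw [hsplit]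
  refine ((tileable_strip 1 s).union hT.tileable ?_).union
    (hT'.tileable.union (tileable_strip (c + 3) u) ?_) ?_ <;>
  · rw [Set.disjoint_left]
    rintro ⟨i, j⟩ hx hx'
    simp only [strip, Set.mem_ofPred_eq, Set.mem_union, Set.mem_insert_iff,
      Set.mem_singleton_iff, Prod.mk.injEq] at hx hx'
    omega

/-- Domino-Deficient Direc Theorem. -/
theorem domino_deficient_direc (t : ℕ) (n : ℤ) (hn : n = 3 * t + 4) :
    (∀ c : ℤ, ({(1, c), (2, c)} : Set Cell) ⊆ rect 2 n →
      (Tileable (rect 2 n \ ({(1, c), (2, c)} : Set Cell)) ↔ c % 3 = 1)) ∧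
    (∀ r c : ℤ, (r = 1 ∨ r = 2) → ({(r, c), (r, c + 1)} : Set Cell) ⊆ rect 2 n →
      (Tileable (rect 2 n \ ({(r, c), (r, c + 1)} : Set Cell)) ↔ c % 3 = 2)) := by
  have hn3 : n % 3 = 1 := by omega
  exact ⟨fun c hD => ⟨mod_three_eq_one_of_tileable_rect_sdiff_vdomino hD,
      fun hc => tileable_rect_sdiff_vdomino hD hc hn3⟩,
    fun r c _ hD => ⟨mod_three_eq_two_of_tileable_rect_sdiff_hdomino hD,
      fun hc => tileable_rect_sdiff_hdomino hD hc hn3⟩⟩
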